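/- Let π ∈ S and τ^π = τ_{F^π} (in particular, when every π_s is the identity, τ^π = τ_F). Then (τ^π)̂_𝟎 = 1, and (τ^π)̂_𝐧 = 0 for every 𝐧 ∈ ℕ₀^d ∖ {𝟎} that does not belong to any block B_{2m_s}, s ≥ 1. -/

import Mathlib

open Filter Finset Topology MeasureTheory
open scoped Classical

noncomputable section

instance : TopologicalSpace (ZMod 2) := ⊥
instance : DiscreteTopology (ZMod 2) := ⟨rfl⟩

/-- The dyadic (Cantor) group `𝔾`: sequences of elements of `ℤ/2ℤ`
with coordinatewise addition modulo 2, Tychonoff topology. -/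
abbrev DyadicGroup : Type := ℕ → ZMod 2

instance : MeasurableSpace DyadicGroup := borel _
instance : BorelSpace DyadicGroup := ⟨rfl⟩

/-- `𝔾^d`. -/
abbrev GD (d : ℕ) : Type := Fin d → DyadicGroup

/-- One-dimensional Walsh function `W_n` in the Paley enumeration:
`W_n(g) = ∏_k (-1)^(g_k n_k)`. -/
def walsh (n : ℕ) (g : DyadicGroup) : ℝ :=
  ∏ k ∈ Finset.range n, if n.testBit k ∧ g k = 1 then (-1 : ℝ) else 1

/-- `d`-dimensional Walsh function `W_𝐧(𝐠) = ∏ W_{n^l}(g^l)`. -/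
def walshD {d : ℕ} (n : Fin d → ℕ) (g : GD d) : ℝ :=
  ∏ l, walsh (n l) (g l)

/-- The dyadic interval `Δ^{(k)}_m` of rank `k`. -/
def dyadicInterval (k m : ℕ) : Set DyadicGroup :=
  {g | ∀ t < k, g t = if m.testBit (k - 1 - t) then 1 else 0}

/-- The dyadic cube `Δ^{(k)}_𝐦 = Δ^{(k)}_{m^1} × ⋯ × Δ^{(k)}_{m^d}`. -/
def dyadicCube {d : ℕ} (k : ℕ) (m : Fin d → ℕ) : Set (GD d) :=
  {g | ∀ l, g l ∈ dyadicInterval k (m l)}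

/-- The canonical point of `Δ^{(k)}_m`. -/
def intervalPoint (k m : ℕ) : DyadicGroup :=
  fun t => if t < k ∧ m.testBit (k - 1 - t) then 1 else 0

/-- The canonical point of `Δ^{(k)}_𝐦`. -/
def cubePoint {d : ℕ} (k : ℕ) (m : Fin d → ℕ) : GD d :=
  fun l => intervalPoint k (m l)

/-- `W^{(k)}_{n,m}`: the (constant, for `n < 2^k`) value of `W_n` on `Δ^{(k)}_m`. -/
def walshVal (k n m : ℕ) : ℝ := walsh n (intervalPoint k m)

/-- `W^{(k)}_{𝐧𝐦}`: the (constant, for `𝐧 < 2^k·𝟏`) value of `W_𝐧` on `Δ^{(k)}_𝐦`. -/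
def walshValD {d : ℕ} (k : ℕ) (n m : Fin d → ℕ) : ℝ := walshD n (cubePoint k m)

/-- The box `{𝐧 : 𝐧 < 𝐍}` as a finset. -/
def boxLt {d : ℕ} (N : Fin d → ℕ) : Finset (Fin d → ℕ) :=
  Fintype.piFinset fun l => Finset.range (N l)

/-- The box `{0,…,2^k−1}^d` as a set. -/
def box (d k : ℕ) : Set (Fin d → ℕ) := {m | ∀ l, m l < 2 ^ k}

/-- The rectangular partial sum `S_𝐍(𝐠)` of the Walsh series with coefficients `a`. -/
def walshPartialSum {d : ℕ} (a : (Fin d → ℕ) → ℂ) (N : Fin d → ℕ) (g : GD d) : ℂ :=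
  ∑ n ∈ boxLt N, a n * (walshD n g : ℂ)

/-- Convergence over rectangles: `S_𝐍(𝐠) → S` as `min_j N^j → ∞`. -/
def ConvergesOverRectangles {d : ℕ} (a : (Fin d → ℕ) → ℂ) (g : GD d) (S : ℂ) : Prop :=
  Tendsto (fun N : Fin d → ℕ => walshPartialSum a N g) atTop (𝓝 S)

/-- Convergence over cubes: `S_{N𝟏}(𝐠) → S` as `N → ∞`. -/
def ConvergesOverCubes {d : ℕ} (a : (Fin d → ℕ) → ℂ) (g : GD d) (S : ℂ) : Prop :=
  Tendsto (fun N : ℕ => walshPartialSum a (fun _ => N) g) atTop (𝓝 S)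

/-- `λ`-convergence: `S_𝐍(𝐠) → S` as `min_j N^j → ∞` along `𝐍` with `max N^j/N^k ≤ λ`. -/
def LambdaConverges {d : ℕ} (lam : ℝ) (a : (Fin d → ℕ) → ℂ) (g : GD d) (S : ℂ) : Prop :=
  ∀ ε : ℝ, 0 < ε → ∃ K : ℕ, ∀ N : Fin d → ℕ, (∀ j, K ≤ N j) →
    (∀ j k, (N j : ℝ) ≤ lam * N k) → ‖walshPartialSum a N g - S‖ < ε

/-- Auxiliary predicate for iterated summation of a multiple series with terms `f`;
the list gives the order of summation, *innermost index first*.  After summing the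
series in the variables of the list, the remaining (partially summed) function is `g`. -/
def IterConvAux {d : ℕ} : List (Fin d) → ((Fin d → ℕ) → ℂ) → ((Fin d → ℕ) → ℂ) → Prop
  | [], f, g => f = g
  | j :: rest, f, g => ∃ h : (Fin d → ℕ) → ℂ,
      (∀ n, Tendsto (fun T : ℕ => ∑ t ∈ Finset.range T, f (Function.update n j t))
        atTop (𝓝 (h n))) ∧ IterConvAux rest h g

/-- The multiple series with terms `f` converges iteratedly to `S`, the order of
summation being given by the list `l` (innermost index first): all successively
nested inner series converge and the full iterated sum equals `S`. -/
def IterConverges {d : ℕ} (l : List (Fin d)) (f : (Fin d → ℕ) → ℂ) (S : ℂ) : Prop :=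
  ∃ g, IterConvAux l f g ∧ ∀ n, g n = S

/-- `A` is an M-set for the `d`-dimensional Walsh system under rectangular convergence. -/
def IsMSetRect {d : ℕ} (A : Set (GD d)) : Prop :=
  ∃ a : (Fin d → ℕ) → ℂ, (∃ n, a n ≠ 0) ∧ ∀ g ∉ A, ConvergesOverRectangles a g 0

/-- `A` is an M-set for the `d`-dimensional Walsh system under convergence over cubes. -/
def IsMSetCubes {d : ℕ} (A : Set (GD d)) : Prop :=
  ∃ a : (Fin d → ℕ) → ℂ, (∃ n, a n ≠ 0) ∧ ∀ g ∉ A, ConvergesOverCubes a g 0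

/-- `A` is an M-set under iterated convergence with summation order `l` (innermost first). -/
def IsMSetIter {d : ℕ} (A : Set (GD d)) (l : List (Fin d)) : Prop :=
  ∃ a : (Fin d → ℕ) → ℂ, (∃ n, a n ≠ 0) ∧
    ∀ g ∉ A, IterConverges l (fun n => a n * (walshD n g : ℂ)) 0

/-- `A` is an M-set for the `d`-dimensional Walsh system under `λ`-convergence. -/
def IsMSetLambda {d : ℕ} (lam : ℝ) (A : Set (GD d)) : Prop :=
  ∃ a : (Fin d → ℕ) → ℂ, (∃ n, a n ≠ 0) ∧ ∀ g ∉ A, LambdaConverges lam a g 0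

/-- A quasimeasure: a finitely additive function on dyadic cubes (indexed by rank
`k` and position `𝐦 < 2^k·𝟏`). -/
def IsQuasimeasure {d : ℕ} (τ : ℕ → (Fin d → ℕ) → ℂ) : Prop :=
  ∀ k m, (∀ l, m l < 2 ^ k) →
    τ k m = ∑ σ : Fin d → Fin 2, τ (k + 1) fun l => 2 * m l + (σ l : ℕ)

/-- The quasimeasure generated by the Walsh series with coefficients `a`:
`τ(Δ^{(k)}_𝐦) = 2^{-kd} ∑_{𝐧<2^k𝟏} a_𝐧 W_𝐧(Δ^{(k)}_𝐦)`. -/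
def genQM {d : ℕ} (a : (Fin d → ℕ) → ℂ) (k : ℕ) (m : Fin d → ℕ) : ℂ :=
  ((2 : ℂ) ^ (k * d))⁻¹ * ∑ n ∈ boxLt (fun _ : Fin d => 2 ^ k), a n * (walshValD k n m : ℂ)

/-- The Fourier–Walsh coefficient `τ̂_𝐧` of a quasimeasure `τ`, computed at resolution `k`
(the value does not depend on `k` as long as `𝐧 < 2^k𝟏`). -/
def fourierCoeffAt {d : ℕ} (τ : ℕ → (Fin d → ℕ) → ℂ) (n : Fin d → ℕ) (k : ℕ) : ℂ :=
  ∑ m ∈ boxLt (fun _ : Fin d => 2 ^ k), (walshValD k n m : ℂ) * τ k m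

/-- The local Fourier–Walsh coefficient `τ̂_𝐧(Δ^{(r)}_{𝐦Δ})`, computed at resolution `k ≥ r`. -/
def localCoeffAt {d : ℕ} (τ : ℕ → (Fin d → ℕ) → ℂ) (n : Fin d → ℕ)
    (r : ℕ) (mΔ : Fin d → ℕ) (k : ℕ) : ℂ :=
  ∑ m ∈ (boxLt (fun _ : Fin d => 2 ^ k)).filter
      (fun m => dyadicCube k m ⊆ dyadicCube r mΔ),
    (walshValD k n m : ℂ) * τ k m

/-- The support of a quasimeasure: the complement of the union of all dyadic cubes `Δ₀`
such that `τ(Δ) = 0` for every dyadic cube `Δ ⊆ Δ₀`. -/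
def qmSupport {d : ℕ} (τ : ℕ → (Fin d → ℕ) → ℂ) : Set (GD d) :=
  (⋃ k, ⋃ m ∈ box d k,
    ⋃ (_ : ∀ k' m', (∀ l, m' l < 2 ^ k') →
        dyadicCube k' m' ⊆ dyadicCube k m → τ k' m' = 0),
    dyadicCube k m)ᶜ

/-- The restriction `τ|_{Δ̃}` of a quasimeasure to the dyadic cube `Δ̃ = Δ^{(r)}_{𝐦Δ}`:
`τ|_{Δ̃}(Δ) = τ(Δ̃ ∩ Δ)` (two dyadic cubes are nested or disjoint). -/
def restrictQM {d : ℕ} (τ : ℕ → (Fin d → ℕ) → ℂ) (r : ℕ) (mΔ : Fin d → ℕ) :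
    ℕ → (Fin d → ℕ) → ℂ := fun k m =>
  if dyadicCube k m ⊆ dyadicCube (d := d) r mΔ then τ k m
  else if dyadicCube (d := d) r mΔ ⊆ dyadicCube k m then τ r mΔ
  else 0

/-- `τ` is the canonical quasimeasure `τ_E` associated with a (nonempty closed) set `E`:
`τ(𝔾^d) = 1`; `τ(Δ) = 0` iff `Δ ∩ E = ∅`; and the mass of a cube meeting `E` is divided
equally among its `2^d` immediate subcubes that meet `E`. -/
def IsTauOf {d : ℕ} (E : Set (GD d)) (τ : ℕ → (Fin d → ℕ) → ℂ) : Prop :=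
  IsQuasimeasure τ ∧
  τ 0 (fun _ => 0) = 1 ∧
  (∀ k m, (∀ l, m l < 2 ^ k) → (τ k m = 0 ↔ dyadicCube k m ∩ E = ∅)) ∧
  (∀ k m, (∀ l, m l < 2 ^ k) → (dyadicCube k m ∩ E).Nonempty →
    ∀ σ : Fin d → Fin 2,
      τ (k + 1) (fun l => 2 * m l + (σ l : ℕ)) =
        if (dyadicCube (k + 1) (fun l => 2 * m l + (σ l : ℕ)) ∩ E).Nonempty then
          τ k m / ((Finset.univ.filter fun σ' : Fin d → Fin 2 =>
              (dyadicCube (k + 1) (fun l => 2 * m l + (σ' l : ℕ)) ∩ E).Nonempty).card : ℂ)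
        else 0)

/-- The sequence `m_s`: `m_1 = 0`, `m_{s+1} = 2(2m_s+1)` (value at `0` is junk). -/
def mSeq : ℕ → ℕ
  | 0 => 0
  | s + 1 => if s = 0 then 0 else 2 * (2 * mSeq s + 1)

/-- The layer `F_s^π`. -/
def Fspi {d : ℕ} (π : ℕ → (Fin d → ℕ) → Fin d → ℕ) (s : ℕ) : Set (GD d) :=
  ⋃ m ∈ box d (mSeq s), ⋃ m' ∈ box d (mSeq s),
    {g | g ∈ dyadicCube (2 * mSeq s) (fun l => 2 ^ mSeq s * m l + m' l) ∧
      walshD (fun _ => 2 ^ (2 * mSeq s)) g = walshValD (mSeq s) (π s m) m'}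

/-- `F̃_s^π = F_1^π ∩ ⋯ ∩ F_s^π` (so `F̃_0^π = 𝔾^d`). -/
def Ftil {d : ℕ} (π : ℕ → (Fin d → ℕ) → Fin d → ℕ) (s : ℕ) : Set (GD d) :=
  ⋂ k ∈ Finset.Icc 1 s, Fspi π k

/-- `F^π = ⋂_{s≥1} F_s^π`. -/
def Fpi {d : ℕ} (π : ℕ → (Fin d → ℕ) → Fin d → ℕ) : Set (GD d) :=
  ⋂ s ∈ Set.Ici 1, Fspi π s

/-- The identity element of `S` (yielding `F_s`, `F̃_s` and `F` themselves). -/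
def idPerm (d : ℕ) : ℕ → (Fin d → ℕ) → Fin d → ℕ := fun _ m => m

/-- `S`: sequences `π = (π_s)` of permutations of the boxes `{0,…,2^{m_s}−1}^d`. -/
structure PermSeq (d : ℕ) where
  p : ℕ → Equiv.Perm (Fin d → ℕ)
  maps : ∀ s, Set.MapsTo (p s) (box d (mSeq s)) (box d (mSeq s))

/-- The underlying sequence of functions of an element of `S`. -/
def PermSeq.f {d : ℕ} (π : PermSeq d) : ℕ → (Fin d → ℕ) → Fin d → ℕ := fun s => ⇑(π.p s)

/-- `π ∈ S'`: every `π_s` acts coordinatewise, `π_s(𝐦) = (π_s^1(m^1),…,π_s^d(m^d))`. -/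
def PermSeq.Coordinatewise {d : ℕ} (π : PermSeq d) : Prop :=
  ∀ s, ∃ e : Fin d → ℕ → ℕ, ∀ m : Fin d → ℕ, π.p s m = fun l => e l (m l)

/-- The Dirichlet kernel `D_N = ∑_{n<N} W_n` of the one-dimensional Walsh system. -/
def dirichlet (N : ℕ) (g : DyadicGroup) : ℝ :=
  ∑ n ∈ Finset.range N, walsh n g

/-!
Refining a quasimeasure does not change its Fourier–Walsh coefficients, so `τ̂_𝐧` may be
computed at rank `K + 1`, where `K` is the top binary digit of `𝐧`. Grouping the cubes of rank
`K + 1` by their parents, `W_𝐧` on a child is its value on the parent times the character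
`σ ↦ (-1)^⟨b, σ⟩` of the child's position `σ ∈ (ℤ/2ℤ)^d`, where `b ≠ 0` collects the `K`-th
digits of `𝐧`.

Whether a cube meets `F^π` is decided by the layers `F_s` with `2m_s` below its rank: a later
layer only constrains the digit at position `2m_s`, which can be corrected by flipping it in one
coordinate. Hence the mass of a cube meeting `F^π` is spread evenly over all its children,
unless `K = 2m_s`; then it is spread evenly over the children of one parity, prescribed by
`π_s`. The character sums over `(ℤ/2ℤ)^d` and over a parity class vanish, the latter because
`𝐧 ∉ B_K` means that `b` is not the all-ones vector.
-/

lemma mem_dyadicInterval_succ_iff {k m b : ℕ} (hb : b < 2) (g : DyadicGroup) :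
    g ∈ dyadicInterval (k + 1) (2 * m + b) ↔ g ∈ dyadicInterval k m ∧ g k = b := by
  have hhigh : ∀ t < k, (2 * m + b).testBit (k + 1 - 1 - t) = m.testBit (k - 1 - t) := by
    intro t ht
    rw [show k + 1 - 1 - t = (k - 1 - t) + 1 by omega, Nat.testBit_succ,
      show (2 * m + b) / 2 = m by omega]
  have hlow : (if (2 * m + b).testBit (k + 1 - 1 - k) then 1 else 0 : ZMod 2) = b := by
    rw [show k + 1 - 1 - k = 0 by omega, Nat.testBit_zero, show (2 * m + b) % 2 = b by omega]
    interval_cases b <;> rfl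
  constructor
  · intro hg
    refine ⟨fun t ht => ?_, ?_⟩
    · rw [hg t (by omega), hhigh t ht]
    · rw [hg k (by omega), hlow]
  · rintro ⟨hg, hgk⟩ t ht
    rcases Nat.lt_succ_iff_lt_or_eq.1 ht with ht | rfl
    · rw [hg t ht, hhigh t ht]
    · rw [hgk, hlow]

lemma exists_mem_dyadicInterval (k : ℕ) (g : DyadicGroup) :
    ∃ m < 2 ^ k, g ∈ dyadicInterval k m := by
  induction k with
  | zero => exact ⟨0, by norm_num, fun t ht => absurd ht (Nat.not_lt_zero t)⟩
  | succ k ih =>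
    obtain ⟨m, hm, hg⟩ := ih
    have hbit : (g k).val < 2 := ZMod.val_lt _
    refine ⟨2 * m + (g k).val, by rw [pow_succ]; omega, ?_⟩
    exact (mem_dyadicInterval_succ_iff hbit g).2 ⟨hg, (ZMod.natCast_zmod_val _).symm⟩

lemma eq_of_mem_dyadicInterval {k m m' : ℕ} {g : DyadicGroup} (hm : m < 2 ^ k)
    (hm' : m' < 2 ^ k) (hg : g ∈ dyadicInterval k m) (hg' : g ∈ dyadicInterval k m') :
    m = m' := by
  refine Nat.eq_of_testBit_eq fun j => ?_
  rcases lt_or_ge j k with hj | hj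
  · have h := (hg (k - 1 - j) (by omega)).symm.trans (hg' (k - 1 - j) (by omega))
    rw [show k - 1 - (k - 1 - j) = j by omega] at h
    cases hb : m.testBit j <;> cases hb' : m'.testBit j <;> simp_all
  · rw [Nat.testBit_lt_two_pow (hm.trans_le (Nat.pow_le_pow_right two_pos hj)),
      Nat.testBit_lt_two_pow (hm'.trans_le (Nat.pow_le_pow_right two_pos hj))]

lemma intervalPoint_mem_dyadicInterval (k m : ℕ) : intervalPoint k m ∈ dyadicInterval k m := by
  intro t ht
  simp [intervalPoint, ht]

lemma intervalPoint_of_le {k m t : ℕ} (h : k ≤ t) : intervalPoint k m t = 0 := by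
  simp [intervalPoint, Nat.not_lt.2 h]

section Cubes

variable {d : ℕ}

lemma mem_dyadicCube_child_iff {k : ℕ} {m : Fin d → ℕ} (σ : Fin d → Fin 2) (g : GD d) :
    g ∈ dyadicCube (k + 1) (fun l => 2 * m l + (σ l : ℕ)) ↔
      g ∈ dyadicCube k m ∧ ∀ l, g l k = (σ l : ℕ) := by
  simp only [dyadicCube, Set.mem_ofPred_eq, mem_dyadicInterval_succ_iff (σ _).isLt, forall_and]

lemma dyadicCube_child_subset (k : ℕ) (m : Fin d → ℕ) (σ : Fin d → Fin 2) :
    dyadicCube (k + 1) (fun l => 2 * m l + (σ l : ℕ)) ⊆ dyadicCube k m :=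
  fun g hg => ((mem_dyadicCube_child_iff σ g).1 hg).1

lemma exists_mem_dyadicCube (k : ℕ) (g : GD d) :
    ∃ m : Fin d → ℕ, (∀ l, m l < 2 ^ k) ∧ g ∈ dyadicCube k m := by
  choose m hm hg using fun l => exists_mem_dyadicInterval k (g l)
  exact ⟨m, hm, hg⟩

lemma eq_of_mem_dyadicCube {k : ℕ} {m m' : Fin d → ℕ} {g : GD d} (hm : ∀ l, m l < 2 ^ k)
    (hm' : ∀ l, m' l < 2 ^ k) (hg : g ∈ dyadicCube k m) (hg' : g ∈ dyadicCube k m') :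
    m = m' :=
  funext fun l => eq_of_mem_dyadicInterval (hm l) (hm' l) (hg l) (hg' l)

lemma mem_dyadicCube_congr {k : ℕ} {m : Fin d → ℕ} {g g' : GD d}
    (h : ∀ l, ∀ t < k, g l t = g' l t) : g ∈ dyadicCube k m ↔ g' ∈ dyadicCube k m := by
  simp only [dyadicCube, dyadicInterval, Set.mem_ofPred_eq]
  exact forall_congr' fun l => forall₂_congr fun t ht => by rw [h l t ht]

lemma cubePoint_mem_dyadicCube (k : ℕ) (m : Fin d → ℕ) : cubePoint k m ∈ dyadicCube k m :=
  fun l => intervalPoint_mem_dyadicInterval k (m l)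

end Cubes

lemma walsh_eq_prod_range {n N : ℕ} (hn : n < 2 ^ N) (g : DyadicGroup) :
    walsh n g = ∏ j ∈ Finset.range N, if n.testBit j ∧ g j = 1 then (-1 : ℝ) else 1 := by
  have hvanish : ∀ M, n < 2 ^ M → ∀ j ∈ Finset.range (max n N), j ∉ Finset.range M →
      (if n.testBit j ∧ g j = 1 then (-1 : ℝ) else 1) = 1 := by
    intro M hM j _ hj
    rw [Finset.mem_range, not_lt] at hj
    simp [Nat.testBit_lt_two_pow (hM.trans_le (Nat.pow_le_pow_right two_pos hj))]
  exact (Finset.prod_subset (Finset.range_subset_range.2 (le_max_left n N))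
      (hvanish n Nat.lt_two_pow_self)).trans
    (Finset.prod_subset (Finset.range_subset_range.2 (le_max_right n N)) (hvanish N hn)).symm

lemma walsh_eq_one_or_eq_neg_one (n : ℕ) (g : DyadicGroup) : walsh n g = 1 ∨ walsh n g = -1 :=
  Finset.prod_induction _ (fun x : ℝ => x = 1 ∨ x = -1)
    (by rintro a b (rfl | rfl) (rfl | rfl) <;> norm_num) (Or.inl rfl)
    fun j _ => by split_ifs <;> simp

lemma walshD_eq_one_or_eq_neg_one {d : ℕ} (n : Fin d → ℕ) (g : GD d) :
    walshD n g = 1 ∨ walshD n g = -1 :=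
  Finset.prod_induction _ (fun x : ℝ => x = 1 ∨ x = -1)
    (by rintro a b (rfl | rfl) (rfl | rfl) <;> norm_num) (Or.inl rfl)
    fun l _ => walsh_eq_one_or_eq_neg_one _ _

lemma walshD_two_pow {d : ℕ} (t : ℕ) (g : GD d) :
    walshD (fun _ => 2 ^ t) g = ∏ l, if g l t = 1 then (-1 : ℝ) else 1 := by
  refine Finset.prod_congr rfl fun l _ => ?_
  rw [walsh_eq_prod_range (Nat.pow_lt_pow_right one_lt_two t.lt_succ_self),
    Finset.prod_range_succ, Finset.prod_eq_one fun j hj => ?_]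
  · simp
  · simp [Nat.testBit_two_pow_of_ne (Finset.mem_range.1 hj).ne']

lemma walshVal_child {K n : ℕ} (hn : n < 2 ^ (K + 1)) (a : ℕ) (b : Fin 2) :
    walshVal (K + 1) n (2 * a + b) =
      walshVal K n a * if n.testBit K ∧ b = 1 then -1 else 1 := by
  obtain ⟨hlow, htop⟩ := (mem_dyadicInterval_succ_iff b.isLt _).1
    (intervalPoint_mem_dyadicInterval (K + 1) (2 * a + b))
  rw [walshVal, walshVal, walsh_eq_prod_range hn, walsh_eq_prod_range hn,
    Finset.prod_range_succ, Finset.prod_range_succ, htop, intervalPoint_of_le le_rfl]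
  have hprefix : ∀ j ∈ Finset.range K, intervalPoint (K + 1) (2 * a + b) j = intervalPoint K a j :=
    fun j hj => by
      rw [hlow j (Finset.mem_range.1 hj),
        intervalPoint_mem_dyadicInterval K a j (Finset.mem_range.1 hj)]
  rw [Finset.prod_congr rfl fun j hj => by rw [hprefix j hj]]
  fin_cases b <;> simp

section SignChar

variable {d : ℕ}

/-- The character `σ ↦ (-1)^⟨b, σ⟩` of `(ℤ/2ℤ)^d`. -/
def signChar (b : Fin d → Bool) (σ : Fin d → Fin 2) : ℝ :=
  ∏ l, if b l ∧ σ l = 1 then -1 else 1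

lemma signChar_false (σ : Fin d → Fin 2) : signChar (fun _ => false) σ = 1 := by
  simp [signChar]

lemma signChar_eq_one_or_eq_neg_one (b : Fin d → Bool) (σ : Fin d → Fin 2) :
    signChar b σ = 1 ∨ signChar b σ = -1 :=
  Finset.prod_induction _ (fun x : ℝ => x = 1 ∨ x = -1)
    (by rintro x y (rfl | rfl) (rfl | rfl) <;> norm_num) (Or.inl rfl)
    fun l _ => by split_ifs <;> simp

lemma signChar_mul_signChar_true (b : Fin d → Bool) (σ : Fin d → Fin 2) :
    signChar b σ * signChar (fun _ => true) σ = signChar (fun l => !b l) σ := by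
  rw [signChar, signChar, signChar, ← Finset.prod_mul_distrib]
  refine Finset.prod_congr rfl fun l _ => ?_
  cases b l <;> by_cases h : σ l = 1 <;> simp [h]

lemma sum_signChar_eq_zero {b : Fin d → Bool} (hb : ∃ l, b l = true) :
    ∑ σ, signChar b σ = 0 := by
  obtain ⟨l₁, hl₁⟩ := hb
  simp only [signChar]
  rw [← Fintype.prod_sum (fun l (x : Fin 2) => if b l ∧ x = 1 then (-1 : ℝ) else 1)]
  exact Finset.prod_eq_zero (Finset.mem_univ l₁) (by simp [Fin.sum_univ_two, hl₁])

/-- The indicator of `signChar 1 σ = ε` is `(1 + ε * signChar 1 σ) / 2`, and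
`signChar b * signChar 1 = signChar (!b)`: the sum splits into two full character sums. -/
lemma sum_signChar_filter_eq_zero {b : Fin d → Bool} (hb₁ : ∃ l, b l = true)
    (hb₀ : ∃ l, b l = false) {ε : ℝ} (hε : ε = 1 ∨ ε = -1) :
    ∑ σ ∈ Finset.univ.filter (fun σ => signChar (fun _ => true) σ = ε), signChar b σ = 0 := by
  have hindicator : ∀ σ, (if signChar (fun _ => true) σ = ε then signChar b σ else 0) =
      (signChar b σ + ε * signChar (fun l => !b l) σ) / 2 := by
    intro σ
    rw [← signChar_mul_signChar_true]
    rcases signChar_eq_one_or_eq_neg_one (fun _ => true) σ with h | h <;>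
      rcases hε with rfl | rfl <;> norm_num [h]
  have hnot : ∃ l, (!b l) = true := by
    obtain ⟨l₀, hl₀⟩ := hb₀
    exact ⟨l₀, by simp [hl₀]⟩
  rw [Finset.sum_filter, Finset.sum_congr rfl fun σ _ => hindicator σ, ← Finset.sum_div,
    Finset.sum_add_distrib, ← Finset.mul_sum, sum_signChar_eq_zero hb₁,
    sum_signChar_eq_zero hnot]
  simp

lemma walshValD_child {K : ℕ} {n : Fin d → ℕ} (hn : ∀ l, n l < 2 ^ (K + 1))
    (m : Fin d → ℕ) (σ : Fin d → Fin 2) :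
    walshValD (K + 1) n (fun l => 2 * m l + (σ l : ℕ)) =
      walshValD K n m * signChar (fun l => (n l).testBit K) σ := by
  rw [signChar, walshValD, walshValD, walshD, walshD, ← Finset.prod_mul_distrib]
  exact Finset.prod_congr rfl fun l _ => walshVal_child (hn l) (m l) (σ l)

end SignChar

section FourierCoeff

variable {d : ℕ}

lemma mem_boxLt {N m : Fin d → ℕ} : m ∈ boxLt N ↔ ∀ l, m l < N l := by
  simp [boxLt, Fintype.mem_piFinset]

lemma sum_boxLt_two_pow_succ {M : Type*} [AddCommMonoid M] (k : ℕ) (f : (Fin d → ℕ) → M) :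
    ∑ m ∈ boxLt (fun _ : Fin d => 2 ^ (k + 1)), f m =
      ∑ m ∈ boxLt (fun _ : Fin d => 2 ^ k), ∑ σ : Fin d → Fin 2,
        f (fun l => 2 * m l + (σ l : ℕ)) := by
  rw [← Finset.sum_product']
  have hσ : ∀ σ : Fin d → Fin 2, ∀ l, (σ l : ℕ) < 2 := fun σ l => (σ l).isLt
  refine Finset.sum_nbij' (fun m => (fun l => m l / 2, fun l => ⟨m l % 2, Nat.mod_lt _ two_pos⟩))
    (fun p l => 2 * p.1 l + (p.2 l : ℕ)) ?_ ?_ ?_ ?_ ?_ <;>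
    simp only [Finset.mem_product, Finset.mem_univ, and_true, mem_boxLt,
      pow_succ, funext_iff, Prod.forall, Prod.ext_iff, Fin.ext_iff]
  · exact fun m hm l => by have := hm l; omega
  · exact fun m σ hm l => by have := hm l; have := hσ σ l; omega
  · exact fun m _ l => by omega
  · exact fun m σ _ => ⟨fun l => by have := hσ σ l; omega, fun l => by have := hσ σ l; omega⟩
  · exact fun m _ => congrArg f (funext fun l => by omega)

lemma fourierCoeffAt_succ_eq_sum {τ : ℕ → (Fin d → ℕ) → ℂ} {n : Fin d → ℕ} {K : ℕ}
    (hn : ∀ l, n l < 2 ^ (K + 1)) :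
    fourierCoeffAt τ n (K + 1) =
      ∑ m ∈ boxLt (fun _ : Fin d => 2 ^ K), (walshValD K n m : ℂ) *
        ∑ σ : Fin d → Fin 2, (signChar (fun l => (n l).testBit K) σ : ℂ) *
          τ (K + 1) (fun l => 2 * m l + (σ l : ℕ)) := by
  rw [fourierCoeffAt, sum_boxLt_two_pow_succ]
  refine Finset.sum_congr rfl fun m _ => ?_
  rw [Finset.mul_sum]
  refine Finset.sum_congr rfl fun σ _ => ?_
  rw [walshValD_child hn, Complex.ofReal_mul, mul_assoc]

lemma IsQuasimeasure.fourierCoeffAt_succ {τ : ℕ → (Fin d → ℕ) → ℂ} (hτ : IsQuasimeasure τ)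
    {n : Fin d → ℕ} {K : ℕ} (hn : ∀ l, n l < 2 ^ K) :
    fourierCoeffAt τ n (K + 1) = fourierCoeffAt τ n K := by
  have hbits : (fun l => (n l).testBit K) = fun _ => false :=
    funext fun l => Nat.testBit_lt_two_pow (hn l)
  rw [fourierCoeffAt_succ_eq_sum fun l => (hn l).trans (Nat.pow_lt_pow_succ one_lt_two),
    fourierCoeffAt, hbits]
  refine Finset.sum_congr rfl fun m hm => ?_
  simp only [signChar_false, Complex.ofReal_one, one_mul, ← hτ K m (mem_boxLt.1 hm)]

lemma IsQuasimeasure.fourierCoeffAt_eq_of_le {τ : ℕ → (Fin d → ℕ) → ℂ} (hτ : IsQuasimeasure τ)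
    {n : Fin d → ℕ} {k₀ k : ℕ} (hn : ∀ l, n l < 2 ^ k₀) (hk : k₀ ≤ k) :
    fourierCoeffAt τ n k = fourierCoeffAt τ n k₀ := by
  induction k, hk using Nat.le_induction with
  | base => rfl
  | succ k hk ih =>
    rw [hτ.fourierCoeffAt_succ fun l => (hn l).trans_le (Nat.pow_le_pow_right two_pos hk), ih]

lemma fourierCoeffAt_zero_zero (τ : ℕ → (Fin d → ℕ) → ℂ) :
    fourierCoeffAt τ (fun _ => 0) 0 = τ 0 (fun _ => 0) := by
  have hbox : boxLt (fun _ : Fin d => 2 ^ 0) = {fun _ => 0} := by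
    ext m
    simp [mem_boxLt, funext_iff]
  rw [fourierCoeffAt, hbox, Finset.sum_singleton]
  simp [walshValD, walshD, walsh]

end FourierCoeff

lemma IsTauOf.sum_mul_child_eq_zero {d : ℕ} {E : Set (GD d)} {τ : ℕ → (Fin d → ℕ) → ℂ}
    (hτ : IsTauOf E τ) {k : ℕ} {m : Fin d → ℕ} (hm : ∀ l, m l < 2 ^ k)
    (f : (Fin d → Fin 2) → ℂ)
    (hf : (dyadicCube k m ∩ E).Nonempty →
      ∑ σ ∈ Finset.univ.filter
        (fun σ => (dyadicCube (k + 1) (fun l => 2 * m l + (σ l : ℕ)) ∩ E).Nonempty), f σ = 0) :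
    ∑ σ, f σ * τ (k + 1) (fun l => 2 * m l + (σ l : ℕ)) = 0 := by
  obtain ⟨-, -, hzero, hsplit⟩ := hτ
  by_cases hmeet : (dyadicCube k m ∩ E).Nonempty
  · simp only [hsplit k m hm hmeet, mul_ite, mul_zero]
    rw [← Finset.sum_filter, ← Finset.sum_mul, hf hmeet, zero_mul]
  · refine Finset.sum_eq_zero fun σ _ => ?_
    have hchild : ∀ l, 2 * m l + (σ l : ℕ) < 2 ^ (k + 1) := fun l => by
      have := hm l
      have := (σ l).isLt
      rw [pow_succ]
      omega
    rw [(hzero (k + 1) _ hchild).2, mul_zero]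
    exact Set.subset_empty_iff.1 fun g hg =>
      hmeet ⟨g, dyadicCube_child_subset k m σ hg.1, hg.2⟩

lemma mSeq_injOn : Set.InjOn mSeq (Set.Ici 1) := by
  have hmono : StrictMono fun s => mSeq (s + 1) :=
    strictMono_nat_of_lt_succ fun s => by
      show mSeq (s + 1) < 2 * (2 * mSeq (s + 1) + 1)
      omega
  intro s hs t ht hst
  obtain ⟨s, rfl⟩ := Nat.exists_eq_add_of_le' (Set.mem_Ici.1 hs)
  obtain ⟨t, rfl⟩ := Nat.exists_eq_add_of_le' (Set.mem_Ici.1 ht)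
  rw [hmono.injective hst]

/-- Bits are chosen one position at a time; position `j` of the limit is fixed from step `j + 1`
on, because the step at position `t` only changes bits at positions `≥ t`. -/
lemma exists_extension_forall_ge {ι α : Type*} (P : ℕ → (ι → ℕ → α) → Prop)
    (hP : ∀ t g g', (∀ l, ∀ j ≤ t, g l j = g' l j) → P t g → P t g')
    (hext : ∀ t (g : ι → ℕ → α), ∃ g' : ι → ℕ → α, (∀ l, ∀ j < t, g' l j = g l j) ∧ P t g')
    (k : ℕ) (g₀ : ι → ℕ → α) :
    ∃ g, (∀ l, ∀ j < k, g l j = g₀ l j) ∧ ∀ t, k ≤ t → P t g := by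
  choose ext hext_agree hext_P using hext
  let G : ℕ → ι → ℕ → α := fun t =>
    Nat.rec (motive := fun _ => ι → ℕ → α) g₀ (fun t G => if k ≤ t then ext t G else G) t
  have hG_succ : ∀ t, G (t + 1) = if k ≤ t then ext t (G t) else G t := fun _ => rfl
  have hG_init : ∀ t ≤ k, G t = g₀ := by
    intro t ht
    induction t with
    | zero => rfl
    | succ t ih => rw [hG_succ, if_neg (by omega), ih (by omega)]
  have hG_step : ∀ t, ∀ l, ∀ j < t, G (t + 1) l j = G t l j := by
    intro t l j hj
    rw [hG_succ]
    split_ifs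
    exacts [hext_agree _ _ l j hj, rfl]
  have hG_stable : ∀ t t', t ≤ t' → ∀ l, ∀ j < t, G t' l j = G t l j := by
    intro t t' htt' l j hj
    induction t', htt' using Nat.le_induction with
    | base => rfl
    | succ t' ht' ih => rw [hG_step t' l j (by omega), ih]
  refine ⟨fun l j => G (j + 1) l j, fun l j hj => by
    show G (j + 1) l j = _
    rw [hG_init (j + 1) hj], fun t ht => ?_⟩
  refine hP t (G (t + 1)) _ (fun l j hj => hG_stable (j + 1) (t + 1) (by omega) l j
    (by omega)) ?_
  rw [hG_succ, if_pos ht]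
  exact hext_P _ _

section Fpi

variable {d : ℕ} (π : ℕ → (Fin d → ℕ) → Fin d → ℕ)

lemma mem_Fpi {g : GD d} : g ∈ Fpi π ↔ ∀ s, 1 ≤ s → g ∈ Fspi π s := by
  simp [Fpi]

lemma mem_Fspi_congr {s : ℕ} {g g' : GD d} (h : ∀ l, ∀ t ≤ 2 * mSeq s, g l t = g' l t) :
    g ∈ Fspi π s ↔ g' ∈ Fspi π s := by
  have hcube : ∀ M, g ∈ dyadicCube (2 * mSeq s) M ↔ g' ∈ dyadicCube (2 * mSeq s) M :=
    fun M => mem_dyadicCube_congr fun l t ht => h l t ht.le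
  have hwalsh : walshD (fun _ => 2 ^ (2 * mSeq s)) g = walshD (fun _ => 2 ^ (2 * mSeq s)) g' := by
    simp only [walshD_two_pow, h _ _ le_rfl]
  simp only [Fspi, Set.mem_iUnion, Set.mem_ofPred_eq, hcube, hwalsh]

lemma mem_Fspi_iff_of_mem_dyadicCube {s : ℕ} {M : Fin d → ℕ} {g : GD d}
    (hM : ∀ l, M l < 2 ^ (2 * mSeq s)) (hg : g ∈ dyadicCube (2 * mSeq s) M) :
    g ∈ Fspi π s ↔ walshD (fun _ => 2 ^ (2 * mSeq s)) g =
      walshValD (mSeq s) (π s fun l => M l / 2 ^ mSeq s) (fun l => M l % 2 ^ mSeq s) := by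
  have hpos : 0 < 2 ^ mSeq s := Nat.two_pow_pos _
  have hsq : 2 ^ (2 * mSeq s) = 2 ^ mSeq s * 2 ^ mSeq s := by rw [two_mul, pow_add]
  simp only [Fspi, Set.mem_iUnion, Set.mem_ofPred_eq, _root_.box]
  constructor
  · rintro ⟨m, hm, m', hm', hgm, hW⟩
    have hM' : M = fun l => 2 ^ mSeq s * m l + m' l := by
      refine eq_of_mem_dyadicCube hM (fun l => ?_) hg hgm
      rw [hsq]
      nlinarith [hm l, hm' l]
    have hdiv : (fun l => M l / 2 ^ mSeq s) = m := funext fun l => by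
      rw [hM', Nat.mul_add_div hpos, Nat.div_eq_of_lt (hm' l), add_zero]
    have hmod : (fun l => M l % 2 ^ mSeq s) = m' := funext fun l => by
      rw [hM', Nat.mul_add_mod, Nat.mod_eq_of_lt (hm' l)]
    rwa [hdiv, hmod]
  · intro hW
    refine ⟨fun l => M l / 2 ^ mSeq s, fun l => Nat.div_lt_of_lt_mul (hsq ▸ hM l),
      fun l => M l % 2 ^ mSeq s, fun l => Nat.mod_lt _ hpos, ?_, hW⟩
    simpa only [Nat.div_add_mod] using hg

lemma walshD_two_pow_add_single (t : ℕ) (l₀ : Fin d) (g : GD d) :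
    walshD (fun _ => 2 ^ t) (g + Pi.single l₀ (Pi.single t 1)) =
      -walshD (fun _ => 2 ^ t) g := by
  rw [walshD_two_pow, walshD_two_pow, ← Finset.mul_prod_erase _ _ (Finset.mem_univ l₀),
    ← Finset.mul_prod_erase _ _ (Finset.mem_univ l₀), ← neg_mul]
  congr 1
  · have hflip : g l₀ t + 1 = 1 ↔ ¬g l₀ t = 1 := by
      generalize g l₀ t = x
      revert x
      decide
    simp only [Pi.add_apply, Pi.single_eq_same, hflip]
    split_ifs <;> norm_num
  · refine Finset.prod_congr rfl fun l hl => ?_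
    simp [Finset.ne_of_mem_erase hl]

lemma add_single_mem_Fspi (l₀ : Fin d) {s : ℕ} {g : GD d} (hg : g ∉ Fspi π s) :
    g + Pi.single l₀ (Pi.single (2 * mSeq s) 1) ∈ Fspi π s := by
  obtain ⟨M, hM, hgM⟩ := exists_mem_dyadicCube (2 * mSeq s) g
  have hg'M : g + Pi.single l₀ (Pi.single (2 * mSeq s) 1) ∈ dyadicCube (2 * mSeq s) M :=
    (mem_dyadicCube_congr fun l t ht => by
      rcases eq_or_ne l l₀ with rfl | hl <;> simp [ht.ne, *]).1 hgM
  rw [mem_Fspi_iff_of_mem_dyadicCube π hM hgM] at hg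
  rw [mem_Fspi_iff_of_mem_dyadicCube π hM hg'M, walshD_two_pow_add_single]
  rcases walshD_eq_one_or_eq_neg_one (fun _ => 2 ^ (2 * mSeq s)) g with h | h <;>
    rcases walshD_eq_one_or_eq_neg_one (π s fun l => M l / 2 ^ mSeq s)
      (cubePoint (mSeq s) fun l => M l % 2 ^ mSeq s) with h' | h' <;>
    simp_all [walshValD]

lemma dyadicCube_inter_Fpi_nonempty_iff [Nonempty (Fin d)] (k : ℕ) (m : Fin d → ℕ) :
    (dyadicCube k m ∩ Fpi π).Nonempty ↔
      ∀ s, 1 ≤ s → 2 * mSeq s < k → cubePoint k m ∈ Fspi π s := by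
  have hagree : ∀ {g : GD d}, g ∈ dyadicCube k m → ∀ l, ∀ t < k, cubePoint k m l t = g l t :=
    fun hg l t ht => by rw [cubePoint_mem_dyadicCube k m l t ht, hg l t ht]
  constructor
  · rintro ⟨g, hgm, hgF⟩ s hs hsk
    exact (mem_Fspi_congr π fun l t ht => hagree hgm l t (by omega)).2 ((mem_Fpi π).1 hgF s hs)
  · intro hcube
    obtain ⟨l₀⟩ := ‹Nonempty (Fin d)›
    obtain ⟨g, hg_prefix, hgF⟩ := exists_extension_forall_ge
      (fun t g => ∀ s, 1 ≤ s → 2 * mSeq s = t → g ∈ Fspi π s)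
      (fun t g g' hgg' hg s hs hst => (mem_Fspi_congr π (hst ▸ hgg')).1 (hg s hs hst))
      (fun t g => by
        by_cases hbad : ∃ s, 1 ≤ s ∧ 2 * mSeq s = t ∧ g ∉ Fspi π s
        · obtain ⟨s, hs, rfl, hgs⟩ := hbad
          refine ⟨g + Pi.single l₀ (Pi.single (2 * mSeq s) 1), fun l j hj => ?_,
            fun s' hs' hs's => ?_⟩
          · rcases eq_or_ne l l₀ with rfl | hl <;> simp [hj.ne, *]
          · rw [mSeq_injOn hs' hs (by omega)]
            exact add_single_mem_Fspi π l₀ hgs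
        · push Not at hbad
          exact ⟨g, fun _ _ _ => rfl, hbad⟩)
      k (cubePoint k m)
    have hgm : g ∈ dyadicCube k m :=
      (mem_dyadicCube_congr fun l t ht => (hg_prefix l t ht).symm).1 (cubePoint_mem_dyadicCube k m)
    refine ⟨g, hgm, (mem_Fpi π).2 fun s hs => ?_⟩
    rcases lt_or_ge (2 * mSeq s) k with hsk | hks
    · exact (mem_Fspi_congr π fun l t ht => hagree hgm l t (by omega)).1 (hcube s hs hsk)
    · exact hgF _ hks s hs rfl

lemma dyadicCube_child_inter_Fpi_nonempty_iff [Nonempty (Fin d)] {K : ℕ} {m : Fin d → ℕ}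
    (hpar : (dyadicCube K m ∩ Fpi π).Nonempty) (σ : Fin d → Fin 2) :
    (dyadicCube (K + 1) (fun l => 2 * m l + (σ l : ℕ)) ∩ Fpi π).Nonempty ↔
      ∀ s, 1 ≤ s → 2 * mSeq s = K →
        cubePoint (K + 1) (fun l => 2 * m l + (σ l : ℕ)) ∈ Fspi π s := by
  rw [dyadicCube_inter_Fpi_nonempty_iff] at hpar ⊢
  refine ⟨fun h s hs hsK => h s hs (by omega), fun h s hs hsK => ?_⟩
  rcases Nat.lt_succ_iff_lt_or_eq.1 hsK with hlt | heq
  · refine (mem_Fspi_congr π fun l t ht => ?_).1 (hpar s hs hlt)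
    have hchild := dyadicCube_child_subset K m σ (cubePoint_mem_dyadicCube _ _)
    rw [cubePoint_mem_dyadicCube K m l t (by omega), hchild l t (by omega)]
  · exact h s hs heq

lemma cubePoint_child_mem_Fspi_iff {s : ℕ} {m : Fin d → ℕ} (hm : ∀ l, m l < 2 ^ (2 * mSeq s))
    (σ : Fin d → Fin 2) :
    cubePoint (2 * mSeq s + 1) (fun l => 2 * m l + (σ l : ℕ)) ∈ Fspi π s ↔
      signChar (fun _ => true) σ =
        walshValD (mSeq s) (π s fun l => m l / 2 ^ mSeq s) (fun l => m l % 2 ^ mSeq s) := by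
  obtain ⟨hparent, htop⟩ := (mem_dyadicCube_child_iff σ _).1 (cubePoint_mem_dyadicCube _ _)
  rw [mem_Fspi_iff_of_mem_dyadicCube π hm hparent, walshD_two_pow]
  simp only [htop, signChar, true_and]
  congr! 3 with l
  generalize σ l = x
  fin_cases x <;> simp

end Fpi

lemma sum_signChar_mul_tau_child_eq_zero {d : ℕ} [Nonempty (Fin d)]
    {π : ℕ → (Fin d → ℕ) → Fin d → ℕ} {τ : ℕ → (Fin d → ℕ) → ℂ} (hτ : IsTauOf (Fpi π) τ)
    {K : ℕ} {m : Fin d → ℕ} (hm : ∀ l, m l < 2 ^ K) {b : Fin d → Bool}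
    (hb₁ : ∃ l, b l = true) (hb₀ : (∃ s, 1 ≤ s ∧ 2 * mSeq s = K) → ∃ l, b l = false) :
    ∑ σ, (signChar b σ : ℂ) * τ (K + 1) (fun l => 2 * m l + (σ l : ℕ)) = 0 := by
  refine hτ.sum_mul_child_eq_zero hm _ fun hpar => ?_
  simp only [dyadicCube_child_inter_Fpi_nonempty_iff π hpar]
  rw [← Complex.ofReal_sum, Complex.ofReal_eq_zero]
  by_cases hlevel : ∃ s, 1 ≤ s ∧ 2 * mSeq s = K
  · obtain ⟨s, hs, rfl⟩ := hlevel
    have hchildren : ∀ σ : Fin d → Fin 2,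
        (∀ s', 1 ≤ s' → 2 * mSeq s' = 2 * mSeq s →
          cubePoint (2 * mSeq s + 1) (fun l => 2 * m l + (σ l : ℕ)) ∈ Fspi π s') ↔
        signChar (fun _ => true) σ =
          walshValD (mSeq s) (π s fun l => m l / 2 ^ mSeq s) (fun l => m l % 2 ^ mSeq s) := by
      intro σ
      rw [← cubePoint_child_mem_Fspi_iff π hm σ]
      exact ⟨fun h => h s hs rfl, fun h s' hs' hs's => mSeq_injOn hs' hs (by omega) ▸ h⟩
    simp only [hchildren]
    exact sum_signChar_filter_eq_zero hb₁ (hb₀ ⟨s, hs, rfl⟩)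
      (walshD_eq_one_or_eq_neg_one _ _)
  · push Not at hlevel
    rw [Finset.filter_true_of_mem fun σ _ s hs h => absurd h (hlevel s hs)]
    exact sum_signChar_eq_zero hb₁

lemma exists_top_testBit {d : ℕ} {n : Fin d → ℕ} (hn : n ≠ fun _ => 0) :
    ∃ K l₁, (∀ l, n l < 2 ^ (K + 1)) ∧ (n l₁).testBit K = true := by
  obtain ⟨l, hl⟩ := Function.ne_iff.1 hn
  obtain ⟨l₁, -, hmax⟩ := Finset.univ.exists_max_image n ⟨l, Finset.mem_univ l⟩
  have hl₁ : n l₁ ≠ 0 := fun h => hl (Nat.eq_zero_of_le_zero (h ▸ hmax l (Finset.mem_univ l)))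
  exact ⟨(n l₁).log2, l₁, fun l => (hmax l (Finset.mem_univ l)).trans_lt Nat.lt_log2_self,
    Nat.testBit_log2 hl₁⟩

theorem statement11_general (d : ℕ) (π : PermSeq d)
    (τ : ℕ → (Fin d → ℕ) → ℂ) (hτ : IsTauOf (Fpi π.f) τ) :
    (∀ k : ℕ, fourierCoeffAt τ (fun _ => 0) k = 1) ∧
    (∀ n : Fin d → ℕ, n ≠ (fun _ => 0) →
      (∀ s : ℕ, 1 ≤ s →
        ¬(∀ l, 2 ^ (2 * mSeq s) ≤ n l ∧ n l < 2 ^ (2 * mSeq s + 1))) →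
      ∀ k : ℕ, (∀ l, n l < 2 ^ k) → fourierCoeffAt τ n k = 0) := by
  have hq : IsQuasimeasure τ := hτ.1
  refine ⟨fun k => ?_, fun n hn hblock k hk => ?_⟩
  · rw [hq.fourierCoeffAt_eq_of_le (fun _ => Nat.two_pow_pos 0) (Nat.zero_le k),
      fourierCoeffAt_zero_zero, hτ.2.1]
  obtain ⟨K, l₁, hnK, hl₁⟩ := exists_top_testBit hn
  have : Nonempty (Fin d) := ⟨l₁⟩
  have hKk : K + 1 ≤ k :=
    Nat.pow_lt_pow_iff_right one_lt_two |>.1 ((Nat.ge_two_pow_of_testBit hl₁).trans_lt (hk l₁))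
  rw [hq.fourierCoeffAt_eq_of_le hnK hKk, fourierCoeffAt_succ_eq_sum hnK]
  refine Finset.sum_eq_zero fun m hm => ?_
  rw [sum_signChar_mul_tau_child_eq_zero hτ (mem_boxLt.1 hm) ⟨l₁, hl₁⟩ ?_, mul_zero]
  rintro ⟨s, hs, rfl⟩
  obtain ⟨l₀, hl₀⟩ := not_forall.1 (hblock s hs)
  exact ⟨l₀, Nat.testBit_lt_two_pow (not_le.1 fun h => hl₀ ⟨h, hnK l₀⟩)⟩

/-- `(τ^π)̂_𝟎 = 1` and `(τ^π)̂_𝐧 = 0` for every nonzero `𝐧` lying in no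
block `B_{2m_s}`, `s ≥ 1`. -/
theorem statement11 (d : ℕ) (hd : 2 ≤ d) (π : PermSeq d)
    (τ : ℕ → (Fin d → ℕ) → ℂ) (hτ : IsTauOf (Fpi π.f) τ) :
    (∀ k : ℕ, fourierCoeffAt τ (fun _ => 0) k = 1) ∧
    (∀ n : Fin d → ℕ, n ≠ (fun _ => 0) →
      (∀ s : ℕ, 1 ≤ s →
        ¬(∀ l, 2 ^ (2 * mSeq s) ≤ n l ∧ n l < 2 ^ (2 * mSeq s + 1))) →
      ∀ k : ℕ, (∀ l, n l < 2 ^ k) → fourierCoeffAt τ n k = 0) :=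
  statement11_general d π τ hτ
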